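/- arXiv:1701.03326 — 10 statements merged into one kernel-verified Lean document; each statement's English description precedes it below -/
import Mathlib

section
/- Let $X = (X_1, X_2)$ with $\|X_1\|_2 = \|X_2\|_2 = 1$, $X_1^T X_2 = -\hat\rho$, $0 < \hat\rho < 1$, and $\hat\varphi^2 := 1-\hat\rho$. Let $\beta^0 = (\beta_1^0, \beta_2^0)$ with $\beta_1^0 \ge \beta_2^0 > 0$ and suppose $\lambda/\hat\varphi^2 \le \beta_2^0$. Then $\beta^* := (\beta_1^0 - \lambda/\hat\varphi^2, \beta_2^0 - \lambda/\hat\varphi^2)$ minimizes $\beta \mapsto \|X(\beta - \beta^0)\|_2^2 + 2\lambda\|\beta\|_1$ over $\mathbb{R}^2$, and $\|X(\beta^* - \beta^0)\|_2^2 = 2\lambda^2/\hat\varphi^2$. -/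
open scoped RealInnerProductSpace

/-!
The Lasso objective `‖X (β - β⁰)‖² + 2λ‖β‖₁` is convex, so the KKT conditions are sufficient:
if the correlations of the residual `X (β - β⁰)` with the columns are `-λ s` for a subgradient `s`
of `‖·‖₁` at `β`, then expanding `‖X (b - β⁰)‖²` around `β` shows that the objective grows by
`‖X (b - β)‖² + 2λ ∑ (|bᵢ| - sᵢ bᵢ) ≥ 0`. Pairing the same conditions with `β - β⁰` gives the
prediction error `λ ∑ sᵢ (β⁰ᵢ - βᵢ)`. For two unit columns with `⟪X₁, X₂⟫ = -ρ`, shrinking both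
coefficients by `λ / (1 - ρ)` satisfies the KKT conditions with `s = (1, 1)`.
-/

namespace Lasso

variable {E ι : Type*} [NormedAddCommGroup E] [InnerProductSpace ℝ E] [Fintype ι]

noncomputable def objective (X : ι → E) (β₀ : ι → ℝ) (lam : ℝ) (b : ι → ℝ) : ℝ :=
  ‖Fintype.linearCombination ℝ X (b - β₀)‖ ^ 2 + 2 * lam * ∑ i, |b i|

structure KKT (X : ι → E) (β₀ : ι → ℝ) (lam : ℝ) (β s : ι → ℝ) : Prop where
  abs_le_one : ∀ i, |s i| ≤ 1
  mul_eq_abs : ∀ i, s i * β i = |β i|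
  inner_residual : ∀ i, ⟪Fintype.linearCombination ℝ X (β - β₀), X i⟫ = -lam * s i

namespace KKT

variable {X : ι → E} {β₀ β s : ι → ℝ} {lam : ℝ}

theorem inner_residual_linearCombination (h : KKT X β₀ lam β s) (d : ι → ℝ) :
    ⟪Fintype.linearCombination ℝ X (β - β₀), Fintype.linearCombination ℝ X d⟫ =
      -lam * ∑ i, d i * s i := by
  simp only [Fintype.linearCombination_apply, inner_sum, real_inner_smul_right]
  rw [Finset.mul_sum]
  refine Finset.sum_congr rfl fun i _ => ?_
  rw [← Fintype.linearCombination_apply, h.inner_residual]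
  ring

theorem norm_residual_sq (h : KKT X β₀ lam β s) :
    ‖Fintype.linearCombination ℝ X (β - β₀)‖ ^ 2 = lam * ∑ i, s i * (β₀ i - β i) := by
  rw [← real_inner_self_eq_norm_sq, h.inner_residual_linearCombination, neg_mul,
    Finset.mul_sum, Finset.mul_sum, ← Finset.sum_neg_distrib]
  refine Finset.sum_congr rfl fun i _ => ?_
  rw [Pi.sub_apply]
  ring

theorem objective_le (h : KKT X β₀ lam β s) (hlam : 0 ≤ lam) (b : ι → ℝ) :
    objective X β₀ lam β ≤ objective X β₀ lam b := by
  set r := Fintype.linearCombination ℝ X (β - β₀)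
  set d := Fintype.linearCombination ℝ X (b - β)
  have hsplit : Fintype.linearCombination ℝ X (b - β₀) = r + d := by
    rw [← map_add, sub_add_sub_cancel']
  have hcross : ⟪r, d⟫ = -lam * ∑ i, (s i * b i - |β i|) := by
    rw [h.inner_residual_linearCombination]
    congr 1
    refine Finset.sum_congr rfl fun i _ => ?_
    rw [Pi.sub_apply, ← h.mul_eq_abs i]
    ring
  have hsub : ∀ i, s i * b i ≤ |b i| := fun i =>
    calc s i * b i ≤ |s i| * |b i| := by rw [← abs_mul]; exact le_abs_self _
      _ ≤ |b i| := mul_le_of_le_one_left (abs_nonneg _) (h.abs_le_one i)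
  have hpen : 0 ≤ ∑ i, (|b i| - s i * b i) :=
    Finset.sum_nonneg fun i _ => sub_nonneg.2 (hsub i)
  unfold objective
  rw [hsplit, norm_add_sq_real, hcross]
  simp only [Finset.sum_sub_distrib] at hpen ⊢
  nlinarith [sq_nonneg ‖d‖]

end KKT

theorem kkt_pair_shrink {X₁ X₂ : E} {ρ lam β₁ β₂ : ℝ} (h₁ : ‖X₁‖ = 1) (h₂ : ‖X₂‖ = 1)
    (hρ : ⟪X₁, X₂⟫ = -ρ) (hρ₁ : ρ ≠ 1) (hβ₁ : lam / (1 - ρ) ≤ β₁) (hβ₂ : lam / (1 - ρ) ≤ β₂) :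
    KKT ![X₁, X₂] ![β₁, β₂] lam ![β₁ - lam / (1 - ρ), β₂ - lam / (1 - ρ)] 1 := by
  have hφ : 1 - ρ ≠ 0 := sub_ne_zero.2 hρ₁.symm
  have hresidual : Fintype.linearCombination ℝ ![X₁, X₂]
      (![β₁ - lam / (1 - ρ), β₂ - lam / (1 - ρ)] - ![β₁, β₂]) = -(lam / (1 - ρ)) • (X₁ + X₂) := by
    simp only [Fintype.linearCombination_apply, Fin.sum_univ_two, Pi.sub_apply]
    simp [smul_add]
  have h₂₁ : ⟪X₂, X₁⟫ = -ρ := by rw [real_inner_comm, hρ]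
  refine ⟨fun _ => by simp, fun i => ?_, fun i => ?_⟩
  · fin_cases i <;> simp [abs_of_nonneg, hβ₁, hβ₂]
  · rw [hresidual, real_inner_smul_left]
    fin_cases i <;> simp [inner_add_left, h₁, h₂, hρ, h₂₁] <;> field_simp <;> ring

end Lasso

theorem stmt4_general (n : ℕ) (X1 X2 : EuclideanSpace ℝ (Fin n)) (ρ lam β10 β20 : ℝ)
    (h1 : ‖X1‖ = 1) (h2 : ‖X2‖ = 1) (hρ : ⟪X1, X2⟫ = -ρ)
    (hρ1 : ρ < 1) (hlam : 0 < lam)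
    (hβ : β10 ≥ β20)
    (hcase : lam / (1 - ρ) ≤ β20) :
    (∀ b1 b2 : ℝ,
      ‖((β10 - lam / (1 - ρ)) - β10) • X1 + ((β20 - lam / (1 - ρ)) - β20) • X2‖ ^ 2
          + 2 * lam * (|β10 - lam / (1 - ρ)| + |β20 - lam / (1 - ρ)|)
        ≤ ‖(b1 - β10) • X1 + (b2 - β20) • X2‖ ^ 2 + 2 * lam * (|b1| + |b2|)) ∧
    ‖((β10 - lam / (1 - ρ)) - β10) • X1 + ((β20 - lam / (1 - ρ)) - β20) • X2‖ ^ 2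
      = 2 * lam ^ 2 / (1 - ρ) := by
  have hkkt := Lasso.kkt_pair_shrink h1 h2 hρ hρ1.ne (hcase.trans hβ) hcase
  refine ⟨fun b1 b2 => ?_, ?_⟩
  · simpa [Lasso.objective, Fintype.linearCombination_apply, Fin.sum_univ_two] using
      hkkt.objective_le hlam.le ![b1, b2]
  · have h := hkkt.norm_residual_sq
    simp [Fintype.linearCombination_apply, Fin.sum_univ_two] at h ⊢
    rw [h]
    field_simp
    ring

/-- noiseless Lasso with p = s₀ = 2, Case 1. -/
theorem stmt4 (n : ℕ) (X1 X2 : EuclideanSpace ℝ (Fin n)) (ρ lam β10 β20 : ℝ)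
    (h1 : ‖X1‖ = 1) (h2 : ‖X2‖ = 1) (hρ : ⟪X1, X2⟫ = -ρ)
    (hρ0 : 0 < ρ) (hρ1 : ρ < 1) (hlam : 0 < lam)
    (hβ : β10 ≥ β20) (hβ2 : 0 < β20)
    (hcase : lam / (1 - ρ) ≤ β20) :
    (∀ b1 b2 : ℝ,
      ‖((β10 - lam / (1 - ρ)) - β10) • X1 + ((β20 - lam / (1 - ρ)) - β20) • X2‖ ^ 2
          + 2 * lam * (|β10 - lam / (1 - ρ)| + |β20 - lam / (1 - ρ)|)
        ≤ ‖(b1 - β10) • X1 + (b2 - β20) • X2‖ ^ 2 + 2 * lam * (|b1| + |b2|)) ∧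
    ‖((β10 - lam / (1 - ρ)) - β10) • X1 + ((β20 - lam / (1 - ρ)) - β20) • X2‖ ^ 2
      = 2 * lam ^ 2 / (1 - ρ) :=
  stmt4_general n X1 X2 ρ lam β10 β20 h1 h2 hρ hρ1 hlam hβ hcase
end

section
/- Let $X = (X_1, X_2)$ with $\|X_1\|_2 = \|X_2\|_2 = 1$, $X_1^T X_2 = -\hat\rho$, $0 < \hat\rho < 1$, $\hat\varphi^2 := 1-\hat\rho$. Let $\beta_1^0 \ge \beta_2^0 > 0$ and suppose $\beta_2^0 \le \lambda/\hat\varphi^2 \le \beta_2^0 + (\beta_1^0 - \beta_2^0)/\hat\varphi^2$. Then $\beta^* := (\beta_1^0 - (1-\hat\varphi^2)\beta_2^0 - \lambda, 0)$ minimizes $\beta \mapsto \|X(\beta - \beta^0)\|_2^2 + 2\lambda\|\beta\|_1$, and $\|X(\beta^* - \beta^0)\|_2^2 = \hat\varphi^2(2-\hat\varphi^2)(\beta_2^0)^2 + \lambda^2$. -/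
open scoped RealInnerProductSpace
open Finset

/-!
The objective is convex, so `β*` is a minimiser as soon as the KKT conditions hold: for the
residual `r = X (β* - β⁰)`, `-⟪r, Xᵢ⟫` must be a subgradient of `λ |·|` at `β*ᵢ`. Expanding
`‖r + X (β - β*)‖² ≥ ‖r‖² + 2 ⟪r, X (β - β*)⟫` reduces optimality to these coordinatewise
inequalities. With the Gram matrix `[[1, -ρ], [-ρ, 1]]` one finds `⟪r, X₁⟫ = -λ`, matching
`β*₁ ≥ 0`, and `⟪r, X₂⟫ = ρλ - (1 - ρ²) β⁰₂`, whose lower bound `-λ` is exactly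
`(1 - ρ) β⁰₂ ≤ λ`.
-/

theorem sq_norm_add_inner_le {E : Type*} [NormedAddCommGroup E] [InnerProductSpace ℝ E]
    (r h : E) : ‖r‖ ^ 2 + 2 * ⟪r, h⟫ ≤ ‖r + h‖ ^ 2 := by
  rw [norm_add_sq_real]
  nlinarith [sq_nonneg ‖h‖]

theorem lasso_objective_le_of_subgradient {ι E : Type*} [Fintype ι] [NormedAddCommGroup E]
    [InnerProductSpace ℝ E] (X : ι → E) (β₀ c : ι → ℝ) (lam : ℝ)
    -- `-⟪r, X i⟫` is a subgradient of `lam * |·|` at `c i`, where `r` is the residual at `c`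
    (hc : ∀ i t, 0 ≤ ⟪∑ j, (c j - β₀ j) • X j, X i⟫ * (t - c i) + lam * (|t| - |c i|))
    (b : ι → ℝ) :
    ‖∑ i, (c i - β₀ i) • X i‖ ^ 2 + 2 * lam * ∑ i, |c i|
      ≤ ‖∑ i, (b i - β₀ i) • X i‖ ^ 2 + 2 * lam * ∑ i, |b i| := by
  set r := ∑ j, (c j - β₀ j) • X j
  have hsplit : ∑ i, (b i - β₀ i) • X i = r + ∑ i, (b i - c i) • X i := by
    simp only [r, ← sum_add_distrib, ← add_smul, sub_add_sub_cancel']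
  have hinner : ⟪r, ∑ i, (b i - c i) • X i⟫ = ∑ i, ⟪r, X i⟫ * (b i - c i) := by
    simp only [inner_sum, real_inner_smul_right, mul_comm]
  have hsum := sum_nonneg fun i (_ : i ∈ univ) => hc i (b i)
  rw [sum_add_distrib, ← mul_sum, sum_sub_distrib] at hsum
  rw [hsplit]
  linarith [sq_norm_add_inner_le r (∑ i, (b i - c i) • X i)]

theorem subgradient_abs_of_nonneg {c lam : ℝ} (hc : 0 ≤ c) (hlam : 0 ≤ lam) (t : ℝ) :
    0 ≤ -lam * (t - c) + lam * (|t| - |c|) := by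
  rw [abs_of_nonneg hc]
  nlinarith [le_abs_self t]

theorem subgradient_abs_zero {g lam : ℝ} (hg : |g| ≤ lam) (t : ℝ) :
    0 ≤ g * t + lam * |t| := by
  have := neg_abs_le (g * t)
  rw [abs_mul] at this
  nlinarith [abs_nonneg t]

theorem norm_smul_add_smul_sq {E : Type*} [NormedAddCommGroup E] [InnerProductSpace ℝ E]
    {x y : E} {ρ : ℝ} (hx : ‖x‖ = 1) (hy : ‖y‖ = 1) (hxy : ⟪x, y⟫ = -ρ) (a b : ℝ) :
    ‖a • x + b • y‖ ^ 2 = a ^ 2 - 2 * ρ * a * b + b ^ 2 := by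
  rw [norm_add_sq_real, real_inner_smul_left, real_inner_smul_right, norm_smul, norm_smul,
    hx, hy, hxy, Real.norm_eq_abs, Real.norm_eq_abs]
  simp only [mul_one, sq_abs]
  ring

theorem inner_smul_add_smul_left_of_norm_eq_one {E : Type*} [NormedAddCommGroup E]
    [InnerProductSpace ℝ E] {x y : E} {ρ : ℝ} (hx : ‖x‖ = 1) (hy : ‖y‖ = 1)
    (hxy : ⟪x, y⟫ = -ρ) (a b : ℝ) :
    ⟪a • x + b • y, x⟫ = a - ρ * b ∧ ⟪a • x + b • y, y⟫ = b - ρ * a := by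
  simp only [inner_add_left, real_inner_smul_left, real_inner_self_eq_norm_sq, hx, hy, hxy,
    real_inner_comm x y]
  constructor <;> ring

theorem abs_mul_sub_one_sub_sq_mul_le {ρ lam β : ℝ} (hρ0 : 0 < ρ) (hρ1 : ρ < 1) (hlam : 0 < lam)
    (hβ : 0 < β) (h : (1 - ρ) * β ≤ lam) : |ρ * lam - (1 - ρ ^ 2) * β| ≤ lam := by
  rw [abs_le]
  constructor
  · nlinarith [mul_nonneg (by linarith : 0 ≤ 1 + ρ) (sub_nonneg.2 h)]
  · nlinarith [mul_pos (by linarith : 0 < 1 - ρ) hlam,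
      mul_pos (mul_pos (by linarith : 0 < 1 - ρ) (by linarith : 0 < 1 + ρ)) hβ]

theorem stmt5_general (n : ℕ) (X1 X2 : EuclideanSpace ℝ (Fin n)) (ρ lam β10 β20 : ℝ)
    (h1 : ‖X1‖ = 1) (h2 : ‖X2‖ = 1) (hρ : ⟪X1, X2⟫ = -ρ)
    (hρ0 : 0 < ρ) (hρ1 : ρ < 1) (hlam : 0 < lam)
    (hβ2 : 0 < β20)
    (hcase1 : β20 ≤ lam / (1 - ρ))
    (hcase2 : lam / (1 - ρ) ≤ β20 + (β10 - β20) / (1 - ρ)) :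
    (∀ b1 b2 : ℝ,
      ‖((β10 - (1 - (1 - ρ)) * β20 - lam) - β10) • X1 + ((0 : ℝ) - β20) • X2‖ ^ 2
          + 2 * lam * (|β10 - (1 - (1 - ρ)) * β20 - lam| + |(0 : ℝ)|)
        ≤ ‖(b1 - β10) • X1 + (b2 - β20) • X2‖ ^ 2 + 2 * lam * (|b1| + |b2|)) ∧
    ‖((β10 - (1 - (1 - ρ)) * β20 - lam) - β10) • X1 + ((0 : ℝ) - β20) • X2‖ ^ 2
      = (1 - ρ) * (2 - (1 - ρ)) * β20 ^ 2 + lam ^ 2 := by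
  set c := β10 - (1 - (1 - ρ)) * β20 - lam
  have hφ : 0 < 1 - ρ := by linarith
  have hlam_ge : (1 - ρ) * β20 ≤ lam := by rwa [le_div_iff₀' hφ] at hcase1
  have hc : 0 ≤ c := by
    have : lam / (1 - ρ) ≤ (β10 - ρ * β20) / (1 - ρ) := by
      convert hcase2 using 1; field_simp; ring
    rw [div_le_div_iff_of_pos_right hφ] at this
    linarith
  refine ⟨fun b1 b2 => ?_, by rw [norm_smul_add_smul_sq h1 h2 hρ]; ring⟩
  obtain ⟨hr1, hr2⟩ := inner_smul_add_smul_left_of_norm_eq_one h1 h2 hρ (c - β10) (0 - β20)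
  have hkkt := lasso_objective_le_of_subgradient ![X1, X2] ![β10, β20] ![c, 0] lam ?_ ![b1, b2]
  · simpa only [Fin.sum_univ_two, Matrix.cons_val_zero, Matrix.cons_val_one] using hkkt
  simp only [Fin.forall_fin_two, Fin.sum_univ_two, Matrix.cons_val_zero, Matrix.cons_val_one,
    hr1, hr2, sub_zero, abs_zero]
  refine ⟨fun t => ?_, subgradient_abs_zero ?_⟩
  · convert subgradient_abs_of_nonneg hc hlam.le t using 3
    ring
  have hg : 0 - β20 - ρ * (c - β10) = ρ * lam - (1 - ρ ^ 2) * β20 := by ring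
  rw [hg]
  exact abs_mul_sub_one_sub_sq_mul_le hρ0 hρ1 hlam hβ2 hlam_ge

/-- noiseless Lasso with p = s₀ = 2, Case 2. -/
theorem stmt5 (n : ℕ) (X1 X2 : EuclideanSpace ℝ (Fin n)) (ρ lam β10 β20 : ℝ)
    (h1 : ‖X1‖ = 1) (h2 : ‖X2‖ = 1) (hρ : ⟪X1, X2⟫ = -ρ)
    (hρ0 : 0 < ρ) (hρ1 : ρ < 1) (hlam : 0 < lam)
    (hβ : β10 ≥ β20) (hβ2 : 0 < β20)
    (hcase1 : β20 ≤ lam / (1 - ρ))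
    (hcase2 : lam / (1 - ρ) ≤ β20 + (β10 - β20) / (1 - ρ)) :
    (∀ b1 b2 : ℝ,
      ‖((β10 - (1 - (1 - ρ)) * β20 - lam) - β10) • X1 + ((0 : ℝ) - β20) • X2‖ ^ 2
          + 2 * lam * (|β10 - (1 - (1 - ρ)) * β20 - lam| + |(0 : ℝ)|)
        ≤ ‖(b1 - β10) • X1 + (b2 - β20) • X2‖ ^ 2 + 2 * lam * (|b1| + |b2|)) ∧
    ‖((β10 - (1 - (1 - ρ)) * β20 - lam) - β10) • X1 + ((0 : ℝ) - β20) • X2‖ ^ 2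
      = (1 - ρ) * (2 - (1 - ρ)) * β20 ^ 2 + lam ^ 2 :=
  stmt5_general n X1 X2 ρ lam β10 β20 h1 h2 hρ hρ0 hρ1 hlam hβ2 hcase1 hcase2
end

section
/- Let $X = (X_1, X_2)$ with $\|X_1\|_2 = \|X_2\|_2 = 1$, $X_1^T X_2 = -\hat\rho$, $0 < \hat\rho < 1$, $\hat\varphi^2 := 1-\hat\rho$. Let $\beta_1^0 \ge \beta_2^0 > 0$ and suppose $\lambda/\hat\varphi^2 \ge \beta_2^0 + (\beta_1^0 - \beta_2^0)/\hat\varphi^2$. Then $\beta^* = (0,0)$ minimizes $\beta \mapsto \|X(\beta - \beta^0)\|_2^2 + 2\lambda\|\beta\|_1$, so that $\|X(\beta^* - \beta^0)\|_2^2 = \|X\beta^0\|_2^2$. -/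
open scoped RealInnerProductSpace

/-- The KKT condition for the Lasso at `0`: expand `‖z - y‖² = ‖z‖² - 2⟪z, y⟫ + ‖y‖²`. -/
theorem norm_sq_le_lasso_objective_of_abs_inner_le {ι E : Type*} [Fintype ι]
    [NormedAddCommGroup E] [InnerProductSpace ℝ E] (X : ι → E) (y : E) (lam : ℝ)
    (hcorr : ∀ i, |⟪X i, y⟫| ≤ lam) (b : ι → ℝ) :
    ‖y‖ ^ 2 ≤ ‖∑ i, b i • X i - y‖ ^ 2 + 2 * lam * ∑ i, |b i| := by
  have hinner : ⟪∑ i, b i • X i, y⟫ ≤ lam * ∑ i, |b i| := by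
    rw [sum_inner, Finset.mul_sum]
    refine Finset.sum_le_sum fun i _ => ?_
    calc ⟪b i • X i, y⟫ = b i * ⟪X i, y⟫ := real_inner_smul_left _ _ _
      _ ≤ |b i * ⟪X i, y⟫| := le_abs_self _
      _ = |b i| * |⟪X i, y⟫| := abs_mul _ _
      _ ≤ |b i| * lam := mul_le_mul_of_nonneg_left (hcorr i) (abs_nonneg _)
      _ = lam * |b i| := mul_comm _ _
  rw [norm_sub_sq_real]
  nlinarith [sq_nonneg ‖∑ i, b i • X i‖]

theorem stmt6_general (n : ℕ) (X1 X2 : EuclideanSpace ℝ (Fin n)) (ρ lam β10 β20 : ℝ)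
    (h1 : ‖X1‖ = 1) (h2 : ‖X2‖ = 1) (hρ : ⟪X1, X2⟫ = -ρ)
    (hρ0 : 0 < ρ) (hρ1 : ρ < 1)
    (hβ : β10 ≥ β20) (hβ2 : 0 < β20)
    (hcase : lam / (1 - ρ) ≥ β20 + (β10 - β20) / (1 - ρ)) :
    (∀ b1 b2 : ℝ,
      ‖((0 : ℝ) - β10) • X1 + ((0 : ℝ) - β20) • X2‖ ^ 2
          + 2 * lam * (|(0 : ℝ)| + |(0 : ℝ)|)
        ≤ ‖(b1 - β10) • X1 + (b2 - β20) • X2‖ ^ 2 + 2 * lam * (|b1| + |b2|)) ∧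
    ‖((0 : ℝ) - β10) • X1 + ((0 : ℝ) - β20) • X2‖ ^ 2 = ‖β10 • X1 + β20 • X2‖ ^ 2 := by
  set y := β10 • X1 + β20 • X2
  have hzero : ((0 : ℝ) - β10) • X1 + ((0 : ℝ) - β20) • X2 = -y := by
    simp only [zero_sub, neg_smul, y]; abel
  have hlam : β10 - ρ * β20 ≤ lam := by
    have hφ : 0 < 1 - ρ := by linarith
    have h := mul_le_mul_of_nonneg_right hcase hφ.le
    rw [add_mul, div_mul_cancel₀ _ hφ.ne', div_mul_cancel₀ _ hφ.ne'] at h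
    linarith
  have hcorr : ∀ i, |⟪![X1, X2] i, y⟫| ≤ lam := by
    have hX1 : ⟪X1, y⟫ = β10 - ρ * β20 := by
      simp [y, inner_add_right, real_inner_smul_right, h1, hρ]; ring
    have hX2 : ⟪X2, y⟫ = β20 - ρ * β10 := by
      simp [y, inner_add_right, real_inner_smul_right, h2,
        real_inner_comm X1 X2 ▸ hρ]; ring
    intro i
    fin_cases i
    · simpa [hX1] using abs_le.mpr ⟨by nlinarith, hlam⟩
    · simpa [hX2] using abs_le.mpr ⟨by nlinarith, by nlinarith⟩
  refine ⟨fun b1 b2 => ?_, by rw [hzero, norm_neg]⟩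
  have h := norm_sq_le_lasso_objective_of_abs_inner_le ![X1, X2] y lam hcorr ![b1, b2]
  have hdiff : (b1 - β10) • X1 + (b2 - β20) • X2 = ∑ i, ![b1, b2] i • ![X1, X2] i - y := by
    simp only [Fin.sum_univ_two, Matrix.cons_val_zero, Matrix.cons_val_one, sub_smul, y]
    abel
  rw [hzero, norm_neg, hdiff]
  simpa [Fin.sum_univ_two] using h

/-- noiseless Lasso with p = s₀ = 2, Case 3: the Lasso is identically zero. -/
theorem stmt6 (n : ℕ) (X1 X2 : EuclideanSpace ℝ (Fin n)) (ρ lam β10 β20 : ℝ)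
    (h1 : ‖X1‖ = 1) (h2 : ‖X2‖ = 1) (hρ : ⟪X1, X2⟫ = -ρ)
    (hρ0 : 0 < ρ) (hρ1 : ρ < 1) (hlam : 0 < lam)
    (hβ : β10 ≥ β20) (hβ2 : 0 < β20)
    (hcase : lam / (1 - ρ) ≥ β20 + (β10 - β20) / (1 - ρ)) :
    (∀ b1 b2 : ℝ,
      ‖((0 : ℝ) - β10) • X1 + ((0 : ℝ) - β20) • X2‖ ^ 2
          + 2 * lam * (|(0 : ℝ)| + |(0 : ℝ)|)
        ≤ ‖(b1 - β10) • X1 + (b2 - β20) • X2‖ ^ 2 + 2 * lam * (|b1| + |b2|)) ∧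
    ‖((0 : ℝ) - β10) • X1 + ((0 : ℝ) - β20) • X2‖ ^ 2 = ‖β10 • X1 + β20 • X2‖ ^ 2 :=
  stmt6_general n X1 X2 ρ lam β10 β20 h1 h2 hρ hρ0 hρ1 hβ hβ2 hcase
end

section
/- Let $\beta^*$ minimize $\mathcal{L}(\beta) = \|X(\beta - \beta^0)\|_2^2 + 2\lambda\|\beta\|_1$ over $\mathbb{R}^p$, with $\lambda > 0$. Let $S_0$ be the support of $\beta^0$, $s_0 = |S_0|$, and let $\hat\phi^2(S_0) > 0$ be the compatibility constant. Then $\|X(\beta^* - \beta^0)\|_2^2 + 2\lambda\|\beta^*_{-S_0}\|_1 \le \lambda^2 s_0/\hat\phi^2(S_0)$. -/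
/-!
Comparing the Lasso objective at `βs` with its values along the segment towards `β0` and letting
the step tend to zero (the first-order optimality condition) gives
`‖X(βs - β0)‖² ≤ λ (‖β0‖₁ - ‖βs‖₁)`. Since `β0` vanishes off `S0`, the triangle inequality turns this
into `‖X(βs - β0)‖² + λ‖βs_{-S0}‖₁ ≤ λ‖(βs - β0)_{S0}‖₁`, so `βs - β0` lies in the cone where the
compatibility constant applies: `φ² ‖(βs - β0)_{S0}‖₁² ≤ s₀ ‖X(βs - β0)‖²`. The bound then follows
from `2λa ≤ φ²a²/s₀ + λ²s₀/φ²`.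
-/

open Finset Filter Topology Matrix

lemma convexOn_sum_abs (ι : Type*) [Fintype ι] :
    ConvexOn ℝ Set.univ (fun x : ι → ℝ => ∑ i, |x i|) := by
  refine ⟨convex_univ, fun x _ y _ a b ha hb hab => ?_⟩
  simp only [Pi.add_apply, Pi.smul_apply, smul_eq_mul, mul_sum, ← sum_add_distrib]
  gcongr with i
  calc |a * x i + b * y i| ≤ |a * x i| + |b * y i| := abs_add_le _ _
    _ = a * |x i| + b * |y i| := by rw [abs_mul, abs_mul, abs_of_nonneg ha, abs_of_nonneg hb]

lemma Matrix.sum_sq_mulVec_smul {m n : Type*} [Fintype m] [Fintype n]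
    (A : Matrix m n ℝ) (c : ℝ) (v : n → ℝ) :
    ∑ i, (A *ᵥ (c • v)) i ^ 2 = c ^ 2 * ∑ i, (A *ᵥ v) i ^ 2 := by
  simp only [Matrix.mulVec_smul, Pi.smul_apply, smul_eq_mul, mul_sum, mul_pow]

lemma IsMinOn.le_mul_sub_of_convexOn {E : Type*} [AddCommGroup E] [Module ℝ E]
    {Q pen : E → ℝ} (hQ : ∀ (c : ℝ) v, Q (c • v) = c ^ 2 * Q v)
    (hpen : ConvexOn ℝ Set.univ pen) {lam : ℝ} (hlam : 0 ≤ lam) {x₀ x : E}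
    (hmin : IsMinOn (fun y => Q (y - x₀) + 2 * lam * pen y) Set.univ x) :
    Q (x - x₀) ≤ lam * (pen x₀ - pen x) := by
  -- Comparing with `x₀` directly would only give the bound with `2 * lam`.
  have along_segment :
      ∀ t ∈ Set.Ioo (0 : ℝ) 1, (2 - t) * Q (x - x₀) ≤ 2 * lam * (pen x₀ - pen x) := by
    rintro t ⟨ht0, ht1⟩
    have hmove := isMinOn_univ_iff.mp hmin ((1 - t) • x + t • x₀)
    have hdiff : (1 - t) • x + t • x₀ - x₀ = (1 - t) • (x - x₀) := by module
    have hconv := hpen.2 (Set.mem_univ x) (Set.mem_univ x₀) (by linarith : 0 ≤ 1 - t) ht0.le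
      (by ring)
    simp only [smul_eq_mul] at hconv
    rw [hdiff, hQ] at hmove
    have : t * ((2 - t) * Q (x - x₀)) ≤ t * (2 * lam * (pen x₀ - pen x)) := by
      nlinarith [mul_le_mul_of_nonneg_left hconv hlam]
    exact le_of_mul_le_mul_left this ht0
  have hlim : Tendsto (fun t : ℝ => (2 - t) * Q (x - x₀)) (𝓝[>] 0) (𝓝 ((2 - 0) * Q (x - x₀))) :=
    ((continuous_const.sub continuous_id).mul continuous_const).continuousWithinAt.tendsto
  have := le_of_tendsto hlim (eventually_of_mem (Ioo_mem_nhdsGT one_pos) along_segment)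
  linarith

lemma sum_abs_sub_sum_abs_le_of_eq_zero_off {ι : Type*} [Fintype ι] [DecidableEq ι]
    {S : Finset ι} {x₀ : ι → ℝ} (hx₀ : ∀ j ∉ S, x₀ j = 0) (x : ι → ℝ) :
    ∑ j, |x₀ j| - ∑ j, |x j| ≤ ∑ j ∈ S, |x j - x₀ j| - ∑ j ∈ Sᶜ, |x j| := by
  have hx₀S : ∑ j, |x₀ j| = ∑ j ∈ S, |x₀ j| :=
    (sum_subset (subset_univ S) fun j _ hj => by rw [hx₀ j hj, abs_zero]).symm
  have htriangle : ∑ j ∈ S, |x₀ j| - ∑ j ∈ S, |x j| ≤ ∑ j ∈ S, |x j - x₀ j| := by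
    rw [← sum_sub_distrib]
    gcongr with j
    rw [abs_sub_comm]
    exact abs_sub_abs_le_abs_sub _ _
  rw [hx₀S, ← sum_add_sum_compl S (fun j => |x j|)]
  linarith

lemma mul_sq_le_of_compatible {ι : Type*} [Fintype ι] [DecidableEq ι] {S : Finset ι}
    {R : (ι → ℝ) → ℝ} (hR : ∀ (c : ℝ) v, R (c • v) = c ^ 2 * R v) {φ : ℝ}
    (hcompat : ∀ v : ι → ℝ, ∑ j ∈ S, |v j| = 1 → ∑ j ∈ Sᶜ, |v j| ≤ 1 → φ ≤ R v)
    {v : ι → ℝ} (hpos : 0 < ∑ j ∈ S, |v j|) (hcone : ∑ j ∈ Sᶜ, |v j| ≤ ∑ j ∈ S, |v j|) :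
    φ * (∑ j ∈ S, |v j|) ^ 2 ≤ R v := by
  set a := ∑ j ∈ S, |v j|
  have hnorm : ∀ T : Finset ι, ∑ j ∈ T, |(a⁻¹ • v) j| = (∑ j ∈ T, |v j|) / a := fun T => by
    simp only [Pi.smul_apply, smul_eq_mul, abs_mul, abs_inv, abs_of_pos hpos, ← mul_sum]
    ring
  have h := hcompat (a⁻¹ • v) (by rw [hnorm, div_self hpos.ne'])
    (by rw [hnorm, div_le_one hpos]; exact hcone)
  rw [hR, inv_pow, ← div_eq_inv_mul, le_div_iff₀ (by positivity)] at h
  exact h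

lemma add_two_mul_le_sq_mul_div {T a b lam s φ : ℝ}
    (hT : 0 ≤ T) (ha : 0 ≤ a) (hs : 0 ≤ s) (hφ : 0 < φ)
    (hbasic : T + lam * b ≤ lam * a) (hcompat : 0 < a → φ * a ^ 2 ≤ s * T) :
    T + 2 * lam * b ≤ lam ^ 2 * s / φ := by
  rw [le_div_iff₀ hφ]
  rcases ha.eq_or_lt with rfl | ha
  · nlinarith
  have hs_pos : 0 < s := by
    rcases hs.eq_or_lt with rfl | hs
    · nlinarith [hcompat ha, mul_pos hφ (pow_pos ha 2)]
    · exact hs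
  have hgm : φ * (2 * lam * a - T) * s ≤ lam ^ 2 * s * s := by
    nlinarith [sq_nonneg (lam * s - φ * a), hcompat ha]
  have hle : (T + 2 * lam * b) * φ * s ≤ φ * (2 * lam * a - T) * s := by
    gcongr ?_ * _
    nlinarith
  exact le_of_mul_le_mul_right (hle.trans hgm) hs_pos

/-- oracle bound for the noiseless Lasso via the compatibility constant. -/
theorem stmt8 (n p : ℕ) (X : Matrix (Fin n) (Fin p) ℝ) (β0 βs : Fin p → ℝ) (lam φ2 : ℝ)
    (hlam : 0 < lam) (hφ : 0 < φ2)
    (S0 : Finset (Fin p)) (hS0 : S0 = Finset.univ.filter fun j => β0 j ≠ 0)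
    (hcompat : ∀ β : Fin p → ℝ, (∑ j ∈ S0, |β j|) = 1 → (∑ j ∈ S0ᶜ, |β j|) ≤ 1 →
      φ2 ≤ (S0.card : ℝ) * ∑ i, (X.mulVec β i) ^ 2)
    (hmin : ∀ β : Fin p → ℝ,
      (∑ i, (X.mulVec (βs - β0) i) ^ 2) + 2 * lam * ∑ j, |βs j|
        ≤ (∑ i, (X.mulVec (β - β0) i) ^ 2) + 2 * lam * ∑ j, |β j|) :
    (∑ i, (X.mulVec (βs - β0) i) ^ 2) + 2 * lam * ∑ j ∈ S0ᶜ, |βs j|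
      ≤ lam ^ 2 * (S0.card : ℝ) / φ2 := by
  have hsupp : ∀ j ∉ S0, β0 j = 0 := by simp [hS0]
  have hbasic := IsMinOn.le_mul_sub_of_convexOn (Q := fun v => ∑ i, (X *ᵥ v) i ^ 2)
    X.sum_sq_mulVec_smul (convexOn_sum_abs _) hlam.le (isMinOn_univ_iff.mpr hmin)
  have hgap := sum_abs_sub_sum_abs_le_of_eq_zero_off hsupp βs
  have hkey : ∑ i, (X *ᵥ (βs - β0)) i ^ 2 + lam * ∑ j ∈ S0ᶜ, |βs j|
      ≤ lam * ∑ j ∈ S0, |βs j - β0 j| := by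
    linarith [mul_le_mul_of_nonneg_left hgap hlam.le]
  have hT : 0 ≤ ∑ i, (X *ᵥ (βs - β0)) i ^ 2 := by positivity
  refine add_two_mul_le_sq_mul_div hT (by positivity) (by positivity) hφ hkey fun ha => ?_
  refine mul_sq_le_of_compatible (fun c v => ?_) hcompat ha ?_
  · rw [X.sum_sq_mulVec_smul]; ring
  · have hoff : ∑ j ∈ S0ᶜ, |βs j - β0 j| = ∑ j ∈ S0ᶜ, |βs j| :=
      sum_congr rfl fun j hj => by rw [hsupp j (mem_compl.mp hj), sub_zero]
    rw [hoff]
    nlinarith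
end

section
/- Let $X = (X_1, \dots, X_{2N}) \in \mathbb{R}^{n\times 2N}$ where for each $k$, $\|X_{2k-1}\|_2 = \|X_{2k}\|_2 = 1$, $X_{2k-1}^T X_{2k} = -\hat\rho_k$ with $0 < \hat\rho_k < 1$, and each pair $(X_{2k-1}, X_{2k})$ is orthogonal to all other columns. Set $\hat\varphi_k^2 = 1 - \hat\rho_k$. Then $\min\{2N\|X\beta\|_2^2 : \|\beta\|_1 = 1\} = N/\sum_{k=1}^N (1/\hat\varphi_k^2)$, and this quantity is at least $\min_k \hat\varphi_k^2$, the smallest eigenvalue of $X^TX$. -/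
open scoped RealInnerProductSpace

open Finset

/-!
Block orthogonality splits `‖∑ β j • X j‖²` into the `2 × 2` forms `a² + b² - 2ρab`, and for
`ρ ≥ 0` each of these is at least `(1 - ρ)/2 · (|a| + |b|)²`, with equality at `a = b ≥ 0`.
The block masses `s_k = |β (k,0)| + |β (k,1)|` sum to `1`, so Titu's form of Cauchy–Schwarz
bounds `∑ (1 - ρ_k)/2 · s_k²` below by `(2 ∑ (1 - ρ_k)⁻¹)⁻¹`, with equality for
`s_k ∝ (1 - ρ_k)⁻¹`; splitting that mass evenly within each pair attains both bounds.
Finally a harmonic mean dominates the minimum.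
-/

lemma abs_add_abs_sq_mul_le {a b r : ℝ} (hr : 0 ≤ r) :
    (1 - r) / 2 * (|a| + |b|) ^ 2 ≤ a ^ 2 + b ^ 2 - 2 * r * (a * b) := by
  nlinarith [sq_nonneg (|a| - |b|), sq_abs a, sq_abs b, abs_mul a b, le_abs_self (a * b)]

lemma inv_sum_inv_le_sum_mul_sq {ι : Type*} (s : Finset ι) {c : ι → ℝ} (hc : ∀ i ∈ s, 0 < c i)
    (x : ι → ℝ) (hx : ∑ i ∈ s, x i = 1) :
    (∑ i ∈ s, (c i)⁻¹)⁻¹ ≤ ∑ i ∈ s, c i * x i ^ 2 := by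
  have := sq_sum_div_le_sum_sq_div s x (g := fun i => (c i)⁻¹) fun i hi => inv_pos.2 (hc i hi)
  simpa [hx, div_inv_eq_mul, mul_comm] using this

lemma inf'_le_card_div_sum_inv {ι : Type*} {s : Finset ι} (hs : s.Nonempty) {c : ι → ℝ}
    (hc : ∀ i ∈ s, 0 < c i) :
    s.inf' hs c ≤ s.card / ∑ i ∈ s, (c i)⁻¹ := by
  have hm : 0 < s.inf' hs c := (lt_inf'_iff hs).2 hc
  have hsum : ∑ i ∈ s, (c i)⁻¹ ≤ s.card * (s.inf' hs c)⁻¹ := by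
    simpa using sum_le_sum fun i hi => inv_anti₀ hm (inf'_le c hi)
  rw [le_div_iff₀ (sum_pos (fun i hi => inv_pos.2 (hc i hi)) hs)]
  calc s.inf' hs c * ∑ i ∈ s, (c i)⁻¹ ≤ s.inf' hs c * (s.card * (s.inf' hs c)⁻¹) :=
        mul_le_mul_of_nonneg_left hsum hm.le
    _ = s.card := by field_simp

section BlockDesign

variable {E : Type*} [NormedAddCommGroup E] [InnerProductSpace ℝ E] {κ : Type*} [Fintype κ]

lemma norm_sum_sq_of_pairwise_inner_eq_zero {ι : Type*} [Fintype ι] (v : ι → E)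
    (hv : Pairwise fun i j => ⟪v i, v j⟫ = 0) :
    ‖∑ i, v i‖ ^ 2 = ∑ i, ‖v i‖ ^ 2 := by
  rw [← real_inner_self_eq_norm_sq, sum_inner]
  refine sum_congr rfl fun i _ => ?_
  rw [inner_sum, sum_eq_single i (fun j _ hji => hv hji.symm) (by simp),
    real_inner_self_eq_norm_sq]

lemma norm_smul_add_smul_sq_of_unit {x y : E} (hx : ‖x‖ = 1) (hy : ‖y‖ = 1) (a b : ℝ) :
    ‖a • x + b • y‖ ^ 2 = a ^ 2 + b ^ 2 + 2 * ⟪x, y⟫ * (a * b) := by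
  rw [norm_add_sq_real, norm_smul, norm_smul, real_inner_smul_left, real_inner_smul_right,
    hx, hy, Real.norm_eq_abs, Real.norm_eq_abs]
  simp only [mul_one, sq_abs]
  ring

structure IsBlockOrthogonalDesign (X : κ × Fin 2 → E) (ρ : κ → ℝ) : Prop where
  norm_eq_one : ∀ j, ‖X j‖ = 1
  inner_pair : ∀ k, ⟪X (k, 0), X (k, 1)⟫ = -ρ k
  inner_of_ne : ∀ k k' i i', k ≠ k' → ⟪X (k, i), X (k', i')⟫ = 0

noncomputable def optimalWeights (ρ : κ → ℝ) (j : κ × Fin 2) : ℝ :=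
  (1 - ρ j.1)⁻¹ / (2 * ∑ k, (1 - ρ k)⁻¹)

namespace IsBlockOrthogonalDesign

variable {X : κ × Fin 2 → E} {ρ : κ → ℝ}

lemma norm_sum_smul_sq (hX : IsBlockOrthogonalDesign X ρ) (β : κ × Fin 2 → ℝ) :
    ‖∑ j, β j • X j‖ ^ 2
      = ∑ k, (β (k, 0) ^ 2 + β (k, 1) ^ 2 - 2 * ρ k * (β (k, 0) * β (k, 1))) := by
  rw [Fintype.sum_prod_type]
  simp only [Fin.sum_univ_two]
  rw [norm_sum_sq_of_pairwise_inner_eq_zero]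
  · refine sum_congr rfl fun k _ => ?_
    rw [norm_smul_add_smul_sq_of_unit (hX.norm_eq_one _) (hX.norm_eq_one _), hX.inner_pair]
    ring
  · intro k k' hkk'
    simp only [inner_add_left, inner_add_right, real_inner_smul_left, real_inner_smul_right,
      hX.inner_of_ne k k' _ _ hkk', mul_zero, add_zero]

lemma inv_two_mul_sum_le_norm_sq (hX : IsBlockOrthogonalDesign X ρ) (hρ₀ : ∀ k, 0 ≤ ρ k)
    (hρ₁ : ∀ k, ρ k < 1) {β : κ × Fin 2 → ℝ} (hβ : ∑ j, |β j| = 1) :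
    (2 * ∑ k, (1 - ρ k)⁻¹)⁻¹ ≤ ‖∑ j, β j • X j‖ ^ 2 := by
  set s : κ → ℝ := fun k => |β (k, 0)| + |β (k, 1)|
  have hs : ∑ k, s k = 1 := by
    simpa only [Fintype.sum_prod_type, Fin.sum_univ_two] using hβ
  calc (2 * ∑ k, (1 - ρ k)⁻¹)⁻¹ = (∑ k, ((1 - ρ k) / 2)⁻¹)⁻¹ := by
        rw [mul_sum]
        exact congrArg _ (sum_congr rfl fun k _ => by rw [inv_div, div_eq_mul_inv])
    _ ≤ ∑ k, (1 - ρ k) / 2 * s k ^ 2 :=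
        inv_sum_inv_le_sum_mul_sq _ (fun k _ => by linarith [hρ₁ k]) s hs
    _ ≤ _ := by
        rw [hX.norm_sum_smul_sq]
        exact sum_le_sum fun k _ => abs_add_abs_sq_mul_le (hρ₀ k)

lemma norm_sum_optimalWeights_smul_sq (hX : IsBlockOrthogonalDesign X ρ) [Nonempty κ]
    (hρ₁ : ∀ k, ρ k < 1) :
    ‖∑ j, optimalWeights ρ j • X j‖ ^ 2 = (2 * ∑ k, (1 - ρ k)⁻¹)⁻¹ := by
  have hc : ∀ k, 0 < 1 - ρ k := fun k => by linarith [hρ₁ k]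
  have hT : 0 < ∑ k, (1 - ρ k)⁻¹ := sum_pos (fun k _ => inv_pos.2 (hc k)) univ_nonempty
  have hblock : ∀ k, optimalWeights ρ (k, 0) ^ 2 + optimalWeights ρ (k, 1) ^ 2
      - 2 * ρ k * (optimalWeights ρ (k, 0) * optimalWeights ρ (k, 1))
      = (1 - ρ k)⁻¹ / (2 * (∑ k, (1 - ρ k)⁻¹) ^ 2) := fun k => by
    have := (hc k).ne'
    simp only [optimalWeights]
    field_simp
    ring
  rw [hX.norm_sum_smul_sq, sum_congr rfl fun k _ => hblock k, ← sum_div]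
  field_simp

end IsBlockOrthogonalDesign

lemma sum_abs_optimalWeights [Nonempty κ] {ρ : κ → ℝ} (hρ₁ : ∀ k, ρ k < 1) :
    ∑ j, |optimalWeights ρ j| = 1 := by
  have hc : ∀ k, 0 < (1 - ρ k)⁻¹ := fun k => inv_pos.2 (by linarith [hρ₁ k])
  have hT : 0 < ∑ k, (1 - ρ k)⁻¹ := sum_pos (fun k _ => hc k) univ_nonempty
  simp only [optimalWeights, Fintype.sum_prod_type, Fin.sum_univ_two,
    abs_of_pos (div_pos (hc _) (mul_pos two_pos hT)), ← two_mul, ← sum_div, ← mul_sum]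
  exact div_self (mul_pos two_pos hT).ne'

end BlockDesign

/-- compatibility constant for the block-orthogonal design of N pairs. -/
theorem stmt10 (n N : ℕ) (hN : 0 < N) (X : Fin N × Fin 2 → EuclideanSpace ℝ (Fin n))
    (ρ : Fin N → ℝ)
    (hnorm : ∀ j, ‖X j‖ = 1)
    (hρ : ∀ k, ⟪X (k, 0), X (k, 1)⟫ = -ρ k)
    (hρ01 : ∀ k, 0 < ρ k ∧ ρ k < 1)
    (horth : ∀ k k' i i', k ≠ k' → ⟪X (k, i), X (k', i')⟫ = 0) :
    IsLeast {t : ℝ | ∃ β : Fin N × Fin 2 → ℝ, (∑ j, |β j|) = 1 ∧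
        t = (2 * N : ℝ) * ‖∑ j, β j • X j‖ ^ 2}
      ((N : ℝ) / ∑ k, (1 - ρ k)⁻¹) ∧
    Finset.univ.inf' ⟨⟨0, hN⟩, Finset.mem_univ _⟩ (fun k => 1 - ρ k)
      ≤ (N : ℝ) / ∑ k, (1 - ρ k)⁻¹ := by
  have hX : IsBlockOrthogonalDesign X ρ := ⟨hnorm, hρ, horth⟩
  have hρ₁ : ∀ k, ρ k < 1 := fun k => (hρ01 k).2
  have : Nonempty (Fin N) := ⟨⟨0, hN⟩⟩
  have hvalue : (N : ℝ) / ∑ k, (1 - ρ k)⁻¹ = 2 * N * (2 * ∑ k, (1 - ρ k)⁻¹)⁻¹ := by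
    ring
  refine ⟨⟨⟨optimalWeights ρ, sum_abs_optimalWeights hρ₁, ?_⟩, ?_⟩, ?_⟩
  · rw [hX.norm_sum_optimalWeights_smul_sq hρ₁, hvalue]
  · rintro t ⟨β, hβ, rfl⟩
    rw [hvalue]
    gcongr
    exact hX.inv_two_mul_sum_le_norm_sq (fun k => (hρ01 k).1.le) hρ₁ hβ
  · simpa only [card_univ, Fintype.card_fin] using
      inf'_le_card_div_sum_inv univ_nonempty fun k _ => sub_pos.2 (hρ₁ k)
end

section
/- In the block-orthogonal design of $N$ pairs with $\hat\varphi_k^2 = 1-\hat\rho_k$, if $\beta^0$ satisfies $\beta^0_{2k-1} \ge \beta^0_{2k} \ge \lambda/\hat\varphi_k^2$ for all $k$, then the noiseless Lasso minimizer $\beta^*$ of $\|X(\beta-\beta^0)\|_2^2 + 2\lambda\|\beta\|_1$ satisfies $\|X(\beta^* - \beta^0)\|_2^2 = 2\lambda^2\sum_{k=1}^N 1/\hat\varphi_k^2$ and $\|X(\beta^* - \beta^0)\|_2^2 + \lambda\|\beta^*\|_1 = \lambda\|\beta^0\|_1$. -/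
open scoped RealInnerProductSpace

/-!
Shrinking every coefficient of the pair `k` by `c k = λ / (1 - ρ k)` gives `β̂ ≥ 0`, and the
block structure makes the residual `v = X(β̂ - β⁰)` satisfy `⟪X j, v⟫ = -λ` for every column:
this is the Lasso KKT condition at `β̂` with all signs `+1`. Completing the square around `β̂`,
the objective at any `β` equals its value at `β̂` plus `‖X(β - β̂)‖² + 2λ(‖β‖₁ - ∑ β)`, so every
minimizer has the fit `v` and the `ℓ₁`-norm `∑ β̂ = ∑ β⁰ - ∑ c`. Finally `‖v‖² = λ ∑ c`, with each
`c k` counted twice.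
-/

section Lasso

variable {ι E : Type*} [Fintype ι] [NormedAddCommGroup E] [InnerProductSpace ℝ E]

def lassoObjective (X : ι → E) (β0 : ι → ℝ) (lam : ℝ) (β : ι → ℝ) : ℝ :=
  ‖∑ j, (β j - β0 j) • X j‖ ^ 2 + 2 * lam * ∑ j, |β j|

theorem lassoObjective_eq_of_inner_eq_neg {X : ι → E} {β0 βh : ι → ℝ} {lam : ℝ}
    (hgrad : ∀ j, ⟪X j, ∑ i, (βh i - β0 i) • X i⟫ = -lam) (β : ι → ℝ) :
    lassoObjective X β0 lam β =
      ‖∑ j, (βh j - β0 j) • X j‖ ^ 2 + 2 * lam * ∑ j, βh j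
        + ‖∑ j, (β j - βh j) • X j‖ ^ 2 + 2 * lam * ∑ j, (|β j| - β j) := by
  set v := ∑ j, (βh j - β0 j) • X j
  set d := ∑ j, (β j - βh j) • X j
  have hsplit : ∑ j, (β j - β0 j) • X j = v + d := by
    simp only [v, d, ← Finset.sum_add_distrib, ← add_smul, sub_add_sub_cancel']
  have hvd : ⟪v, d⟫ = -lam * ∑ j, (β j - βh j) := by
    simp only [d, inner_sum, Finset.mul_sum]
    refine Finset.sum_congr rfl fun j _ => ?_
    rw [real_inner_smul_right, real_inner_comm, hgrad, mul_comm]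
  rw [lassoObjective, hsplit, norm_add_sq_real, hvd]
  simp only [Finset.sum_sub_distrib]
  ring

theorem lasso_minimizer_eq_of_inner_eq_neg {X : ι → E} {β0 βh βs : ι → ℝ} {lam : ℝ}
    (hlam : 0 < lam) (hgrad : ∀ j, ⟪X j, ∑ i, (βh i - β0 i) • X i⟫ = -lam)
    (hβh : ∀ j, 0 ≤ βh j) (hmin : ∀ β, lassoObjective X β0 lam βs ≤ lassoObjective X β0 lam β) :
    ∑ j, (βs j - β0 j) • X j = ∑ j, (βh j - β0 j) • X j ∧ ∑ j, |βs j| = ∑ j, βh j := by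
  have hobj := lassoObjective_eq_of_inner_eq_neg hgrad βs
  have hobjh : lassoObjective X β0 lam βh =
      ‖∑ j, (βh j - β0 j) • X j‖ ^ 2 + 2 * lam * ∑ j, βh j := by
    simp only [lassoObjective, abs_of_nonneg (hβh _)]
  have hpen : 0 ≤ 2 * lam * ∑ j, (|βs j| - βs j) :=
    mul_nonneg (by positivity) (Finset.sum_nonneg fun j _ => sub_nonneg.2 (le_abs_self _))
  have hd := sq_nonneg ‖∑ j, (βs j - βh j) • X j‖
  have hobj_eq : lassoObjective X β0 lam βs = lassoObjective X β0 lam βh :=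
    le_antisymm (hmin βh) (by rw [hobj, hobjh]; linarith)
  have hv : ∑ j, (βs j - β0 j) • X j = ∑ j, (βh j - β0 j) • X j := by
    have hd0 : ‖∑ j, (βs j - βh j) • X j‖ ^ 2 = 0 := by rw [hobj, hobjh] at hobj_eq; linarith
    rw [← sub_eq_zero, ← Finset.sum_sub_distrib]
    simpa [← sub_smul] using hd0
  refine ⟨hv, ?_⟩
  rw [hobjh, lassoObjective, hv, add_right_inj] at hobj_eq
  exact mul_left_cancel₀ (by positivity) hobj_eq

theorem norm_sum_smul_sq_of_inner_eq {X : ι → E} {c : ι → ℝ} {a : ℝ}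
    (h : ∀ j, ⟪X j, ∑ i, c i • X i⟫ = a) : ‖∑ i, c i • X i‖ ^ 2 = a * ∑ i, c i := by
  rw [← real_inner_self_eq_norm_sq, Finset.mul_sum]
  conv_lhs => rw [sum_inner]
  exact Finset.sum_congr rfl fun j _ => by rw [real_inner_smul_left, h, mul_comm]

end Lasso

theorem inner_sum_smul_pairBlock {n N : ℕ} {X : Fin N × Fin 2 → EuclideanSpace ℝ (Fin n)}
    {ρ : Fin N → ℝ} (hnorm : ∀ j, ‖X j‖ = 1) (hρ : ∀ k, ⟪X (k, 0), X (k, 1)⟫ = -ρ k)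
    (horth : ∀ k k' i i', k ≠ k' → ⟪X (k, i), X (k', i')⟫ = 0) (f : Fin N → ℝ)
    (k : Fin N) (i : Fin 2) : ⟪X (k, i), ∑ j, f j.1 • X j⟫ = f k * (1 - ρ k) := by
  rw [inner_sum, Fintype.sum_prod_type, Finset.sum_eq_single k
    (fun k' _ hk' => by simp [real_inner_smul_right, horth k k' i _ (Ne.symm hk')]) (by simp)]
  have hρ' : ⟪X (k, 1), X (k, 0)⟫ = -ρ k := by rw [real_inner_comm, hρ]
  fin_cases i <;> simp [Fin.sum_univ_two, real_inner_smul_right, hnorm, hρ, hρ'] <;> ring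

/-- exact (penalized) prediction error for the block-orthogonal design. -/
theorem stmt11 (n N : ℕ) (X : Fin N × Fin 2 → EuclideanSpace ℝ (Fin n))
    (ρ : Fin N → ℝ) (lam : ℝ) (β0 βs : Fin N × Fin 2 → ℝ)
    (hnorm : ∀ j, ‖X j‖ = 1)
    (hρ : ∀ k, ⟪X (k, 0), X (k, 1)⟫ = -ρ k)
    (hρ01 : ∀ k, 0 < ρ k ∧ ρ k < 1)
    (horth : ∀ k k' i i', k ≠ k' → ⟪X (k, i), X (k', i')⟫ = 0)
    (hlam : 0 < lam)
    (hβ0 : ∀ k, β0 (k, 0) ≥ β0 (k, 1) ∧ β0 (k, 1) ≥ lam / (1 - ρ k))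
    (hmin : ∀ β : Fin N × Fin 2 → ℝ,
      ‖∑ j, (βs j - β0 j) • X j‖ ^ 2 + 2 * lam * ∑ j, |βs j|
        ≤ ‖∑ j, (β j - β0 j) • X j‖ ^ 2 + 2 * lam * ∑ j, |β j|) :
    ‖∑ j, (βs j - β0 j) • X j‖ ^ 2 = 2 * lam ^ 2 * ∑ k, (1 - ρ k)⁻¹ ∧
    ‖∑ j, (βs j - β0 j) • X j‖ ^ 2 + lam * ∑ j, |βs j| = lam * ∑ j, |β0 j| := by
  have hφ : ∀ k, 0 < 1 - ρ k := fun k => sub_pos.2 (hρ01 k).2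
  set c : Fin N → ℝ := fun k => lam / (1 - ρ k)
  set βh : Fin N × Fin 2 → ℝ := fun j => β0 j - c j.1
  have hshift : ∑ j, (βh j - β0 j) • X j = ∑ j, (-c) j.1 • X j := by simp [βh]
  have hgrad : ∀ j, ⟪X j, ∑ i, (βh i - β0 i) • X i⟫ = -lam := fun ⟨k, i⟩ => by
    rw [hshift, inner_sum_smul_pairBlock hnorm hρ horth, Pi.neg_apply, neg_mul,
      div_mul_cancel₀ _ (hφ k).ne']
  have hβh : ∀ j, 0 ≤ βh j := by
    rintro ⟨k, i⟩
    fin_cases i <;> simp [βh, c] <;> linarith [hβ0 k]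
  obtain ⟨hv, habs⟩ := lasso_minimizer_eq_of_inner_eq_neg hlam hgrad hβh hmin
  have hnormsq : ‖∑ j, (βh j - β0 j) • X j‖ ^ 2 = lam * ∑ j : Fin N × Fin 2, c j.1 := by
    rw [hshift, norm_sum_smul_sq_of_inner_eq (fun j => by rw [← hshift, hgrad])]
    simp [Finset.sum_neg_distrib]
  have hcsum : lam * ∑ j : Fin N × Fin 2, c j.1 = 2 * lam ^ 2 * ∑ k, (1 - ρ k)⁻¹ := by
    simp only [c, Fintype.sum_prod_type, Fin.sum_univ_two, Finset.mul_sum, div_eq_mul_inv]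
    exact Finset.sum_congr rfl fun k _ => by ring
  have hβ0sum : ∑ j, |β0 j| = ∑ j, βh j + ∑ j : Fin N × Fin 2, c j.1 := by
    rw [← Finset.sum_add_distrib]
    refine Finset.sum_congr rfl fun j _ => ?_
    rw [abs_of_nonneg (by linarith [hβh j, div_pos hlam (hφ j.1)])]
    ring
  rw [hv, hnormsq, habs, hβ0sum]
  exact ⟨hcsum, by ring⟩
end

section
/- Let $S_0 = \{1,2\}$ with $\|X_1\|_2=\|X_2\|_2=1$, $X_1^TX_2 = -\hat\rho \in (0,1)$, $\hat\varphi^2 = 1-\hat\rho$, and let $X_3, \dots, X_{2+m_0}$ satisfy $X_{S_0}^T X_j = 0$ for all $j \ge 3$. Then the compatibility constant is $\hat\phi^2(S_0) = \hat\varphi^2$, and for $\beta^0$ supported on $\{1,2\}$ with $\beta_1^0 \ge \beta_2^0 \ge \lambda/\hat\varphi^2$, the Lasso minimizer $\beta^*$ satisfies $\|X(\beta^* - \beta^0)\|_2^2 = 2\lambda^2/\hat\varphi^2$ and $\|X(\beta^*-\beta^0)\|_2^2 + \lambda\|\beta^*\|_1 = \lambda\|\beta^0\|_1$. -/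
open scoped RealInnerProductSpace

set_option maxHeartbeats 1000000 in
/-- s₀ = 2 with inactive variables orthogonal to the active ones. -/
theorem stmt12 (n m0 : ℕ) (X1 X2 : EuclideanSpace ℝ (Fin n))
    (Xin : Fin m0 → EuclideanSpace ℝ (Fin n))
    (ρ lam β10 β20 : ℝ)
    (h1 : ‖X1‖ = 1) (h2 : ‖X2‖ = 1) (hρ : ⟪X1, X2⟫ = -ρ)
    (hρ0 : 0 < ρ) (hρ1 : ρ < 1)
    (horth : ∀ j, ⟪X1, Xin j⟫ = 0 ∧ ⟪X2, Xin j⟫ = 0)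
    (hlam : 0 < lam) (hβ : β10 ≥ β20) (hβ2 : β20 ≥ lam / (1 - ρ))
    (βs1 βs2 : ℝ) (βsin : Fin m0 → ℝ)
    (hmin : ∀ (b1 b2 : ℝ) (c : Fin m0 → ℝ),
      ‖(βs1 - β10) • X1 + (βs2 - β20) • X2 + ∑ j, βsin j • Xin j‖ ^ 2
          + 2 * lam * (|βs1| + |βs2| + ∑ j, |βsin j|)
        ≤ ‖(b1 - β10) • X1 + (b2 - β20) • X2 + ∑ j, c j • Xin j‖ ^ 2
          + 2 * lam * (|b1| + |b2| + ∑ j, |c j|)) :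
    IsLeast {t : ℝ | ∃ (b1 b2 : ℝ) (c : Fin m0 → ℝ), |b1| + |b2| = 1 ∧ (∑ j, |c j|) ≤ 1 ∧
        t = 2 * ‖b1 • X1 + b2 • X2 + ∑ j, c j • Xin j‖ ^ 2} (1 - ρ) ∧
    ‖(βs1 - β10) • X1 + (βs2 - β20) • X2 + ∑ j, βsin j • Xin j‖ ^ 2
      = 2 * lam ^ 2 / (1 - ρ) ∧
    ‖(βs1 - β10) • X1 + (βs2 - β20) • X2 + ∑ j, βsin j • Xin j‖ ^ 2
        + lam * (|βs1| + |βs2| + ∑ j, |βsin j|)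
      = lam * (|β10| + |β20|) := by
  have hφ0 : (0:ℝ) < 1 - ρ := by linarith
  -- expansion lemma
  have key : ∀ (u v : ℝ) (c : Fin m0 → ℝ),
      ‖u • X1 + v • X2 + ∑ j, c j • Xin j‖ ^ 2
        = u^2 + v^2 - 2*ρ*u*v + ‖∑ j, c j • Xin j‖^2 := by
    intro u v c
    have hw1 : ⟪X1, ∑ j, c j • Xin j⟫ = 0 := by
      rw [inner_sum]
      exact Finset.sum_eq_zero fun j _ => by rw [real_inner_smul_right, (horth j).1, mul_zero]
    have hw2 : ⟪X2, ∑ j, c j • Xin j⟫ = 0 := by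
      rw [inner_sum]
      exact Finset.sum_eq_zero fun j _ => by rw [real_inner_smul_right, (horth j).2, mul_zero]
    have h12 : ⟪u • X1 + v • X2, ∑ j, c j • Xin j⟫ = 0 := by
      rw [inner_add_left, real_inner_smul_left, real_inner_smul_left, hw1, hw2]; ring
    rw [norm_add_sq_real, h12, norm_add_sq_real, real_inner_smul_left, real_inner_smul_right, hρ,
        norm_smul, norm_smul, h1, h2]
    simp [Real.norm_eq_abs, sq_abs]
    ring
  have hz : (∑ j, (fun _ : Fin m0 => (0:ℝ)) j • Xin j) = 0 :=
    Finset.sum_eq_zero fun j _ => zero_smul ℝ _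
  have hz2 : (∑ j, |(fun _ : Fin m0 => (0:ℝ)) j|) = 0 :=
    Finset.sum_eq_zero fun j _ => abs_zero
  -- Part 1 : IsLeast
  have part1 : IsLeast {t : ℝ | ∃ (b1 b2 : ℝ) (c : Fin m0 → ℝ), |b1| + |b2| = 1 ∧
      (∑ j, |c j|) ≤ 1 ∧
      t = 2 * ‖b1 • X1 + b2 • X2 + ∑ j, c j • Xin j‖ ^ 2} (1 - ρ) := by
    constructor
    · refine ⟨1/2, 1/2, fun _ => 0, ?_, by rw [hz2]; norm_num, ?_⟩
      · rw [abs_of_pos (by norm_num : (0:ℝ) < 1/2)]; norm_num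
      · rw [key, hz, norm_zero]; ring
    · rintro t ⟨b1, b2, c, habs, hc, rfl⟩
      rw [key]
      have hb1 : |b1| ^ 2 = b1 ^ 2 := sq_abs b1
      have hb2 : |b2| ^ 2 = b2 ^ 2 := sq_abs b2
      have hmul : b1 * b2 ≤ |b1| * |b2| := by
        rw [← abs_mul]; exact le_abs_self _
      have hW : (0:ℝ) ≤ ‖∑ j, c j • Xin j‖^2 := sq_nonneg _
      have hcross : 2*ρ*(b1 * b2) ≤ 2*ρ*(|b1| * |b2|) :=
        mul_le_mul_of_nonneg_left hmul (by linarith)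
      have hsq : (0:ℝ) ≤ (1+ρ)*(|b1|-|b2|)^2 := mul_nonneg (by linarith) (sq_nonneg _)
      have h11 : (|b1|+|b2|)^2 = 1 := by rw [habs]; norm_num
      nlinarith [hb1, hb2, hW, hcross, hsq, h11]
  -- βsin = 0
  have hβs0 : ∀ j, βsin j = 0 := by
    have h := hmin βs1 βs2 (fun _ => 0)
    rw [key, key, hz, norm_zero, hz2] at h
    have hsum : (∑ j, |βsin j|) ≤ 0 := by
      nlinarith [sq_nonneg (‖∑ j, βsin j • Xin j‖)]
    have hsum0 : (∑ j, |βsin j|) = 0 :=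
      le_antisymm hsum (Finset.sum_nonneg fun j _ => abs_nonneg _)
    intro j
    exact abs_eq_zero.mp ((Finset.sum_eq_zero_iff_of_nonneg
      (fun j _ => abs_nonneg (βsin j))).mp hsum0 j (Finset.mem_univ j))
  have hws : (∑ j, βsin j • Xin j) = 0 :=
    Finset.sum_eq_zero fun j _ => by rw [hβs0 j, zero_smul]
  have hsabs : (∑ j, |βsin j|) = 0 :=
    Finset.sum_eq_zero fun j _ => by rw [hβs0 j, abs_zero]
  -- set up μ
  set μ := lam / (1 - ρ) with hμdef
  have hμ : (1 - ρ) * μ = lam := by rw [hμdef]; field_simp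
  have hμ0 : 0 < μ := div_pos hlam hφ0
  have hβ10 : 0 ≤ β10 - μ := by linarith
  have hβ20 : 0 ≤ β20 - μ := by linarith
  -- reduced minimality over (b1,b2)
  have hmin2 : ∀ b1 b2 : ℝ,
      ((βs1-β10)^2 + (βs2-β20)^2 - 2*ρ*(βs1-β10)*(βs2-β20)) + 2*lam*(|βs1| + |βs2|)
        ≤ ((b1-β10)^2 + (b2-β20)^2 - 2*ρ*(b1-β10)*(b2-β20)) + 2*lam*(|b1| + |b2|) := by
    intro b1 b2
    have h := hmin b1 b2 (fun _ => 0)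
    rw [key, key, hz, norm_zero, hz2, hws, norm_zero, hsabs] at h
    linarith
  -- identify βs1 βs2
  have hd1 : βs1 = β10 - μ ∧ βs2 = β20 - μ := by
    have h := hmin2 (β10 - μ) (β20 - μ)
    rw [abs_of_nonneg hβ10, abs_of_nonneg hβ20] at h
    have e1 : β10 - μ + (βs1 - (β10 - μ)) ≤ |βs1| := by linarith [le_abs_self βs1]
    have e2 : β20 - μ + (βs2 - (β20 - μ)) ≤ |βs2| := by linarith [le_abs_self βs2]
    have hexp : (βs1-β10)^2 + (βs2-β20)^2 - 2*ρ*(βs1-β10)*(βs2-β20)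
        = ((βs1-(β10-μ))^2 + (βs2-(β20-μ))^2 - 2*ρ*(βs1-(β10-μ))*(βs2-(β20-μ)))
          - 2*((1-ρ)*μ)*((βs1-(β10-μ)) + (βs2-(β20-μ)))
          + (μ^2 + μ^2 - 2*ρ*μ*μ) := by ring
    rw [hμ] at hexp
    have hQ : (βs1-(β10-μ))^2 + (βs2-(β20-μ))^2
        - 2*ρ*(βs1-(β10-μ))*(βs2-(β20-μ)) ≤ 0 := by
      have hquad : (β10-μ-β10)^2 + (β20-μ-β20)^2 - 2*ρ*(β10-μ-β10)*(β20-μ-β20)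
          = μ^2 + μ^2 - 2*ρ*μ*μ := by ring
      rw [hquad] at h
      nlinarith [mul_le_mul_of_nonneg_left e1 (by linarith : (0:ℝ) ≤ 2*lam),
        mul_le_mul_of_nonneg_left e2 (by linarith : (0:ℝ) ≤ 2*lam)]
    have hdd : (βs1-(β10-μ))^2 + (βs2-(β20-μ))^2 ≤ 0 := by
      nlinarith [mul_nonneg hρ0.le (sq_nonneg ((βs1-(β10-μ)) - (βs2-(β20-μ))))]
    constructor
    · nlinarith [sq_nonneg (βs1-(β10-μ)), sq_nonneg (βs2-(β20-μ))]
    · nlinarith [sq_nonneg (βs1-(β10-μ)), sq_nonneg (βs2-(β20-μ))]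
  obtain ⟨hb1, hb2⟩ := hd1
  -- final computations
  have hnorm : ‖(βs1 - β10) • X1 + (βs2 - β20) • X2 + ∑ j, βsin j • Xin j‖ ^ 2
      = 2 * lam ^ 2 / (1 - ρ) := by
    rw [key, hws, norm_zero, hb1, hb2]
    have hstep : (β10 - μ - β10)^2 + (β20 - μ - β20)^2 - 2*ρ*(β10-μ-β10)*(β20-μ-β20) + 0^2
        = 2*((1-ρ)*μ)*μ := by ring
    rw [hstep, hμ, hμdef]
    ring
  refine ⟨part1, hnorm, ?_⟩
  rw [hnorm, hsabs, hb1, hb2, abs_of_nonneg hβ10, abs_of_nonneg hβ20,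
    abs_of_nonneg (by linarith : (0:ℝ) ≤ β10), abs_of_nonneg (by linarith : (0:ℝ) ≤ β20)]
  have : 2 * lam^2 / (1-ρ) = 2*lam*μ := by rw [hμdef]; field_simp
  rw [this]
  ring
end

section
/- Let $X_1, X_2$ be unit vectors with $X_1^TX_2 = -\hat\rho \in (0,1)$, $\hat\varphi^2 = 1-\hat\rho$, and $X_3 = C(X_1+X_2)/2 + U$ where $C > 1$, $C^2\hat\varphi^2/2 < 1$, and $U^T(X_1,X_2) = 0$. Set $\hat\tau^2 = 1 - C^2\hat\varphi^2/2$ (so $\|X_3\|_2 = 1$ requires $\|U\|_2^2 = \hat\tau^2$). Then the compatibility constant for $S_0 = \{1,2\}$ is $\hat\phi^2(S_0) = \hat\varphi^2\hat\tau^2$, equivalently the effective sparsity is $2/\hat\phi^2(S_0) = 2/\hat\varphi^2 + C^2/\hat\tau^2$. -/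
open scoped RealInnerProductSpace

/-!
Write `s = b₁ + b₂`, `d = b₁ - b₂` and `τ² = ‖U‖²`. Since `X₁ + X₂`, `X₁ - X₂` and `U` are
pairwise orthogonal with squared norms `2(1 - ρ)`, `2(1 + ρ)` and `τ²`,
`2‖b₁X₁ + b₂X₂ - b₃X₃‖² = (1 - ρ)(s - C b₃)² + (1 + ρ) d² + 2τ² b₃²`.
Minimising over `b₃` (the minimiser is `b₃ = C(1 - ρ)s/2`, using `2τ² + C²(1 - ρ) = 2`) leaves
`(1 - ρ)τ² s² + (1 + ρ) d² ≥ (1 - ρ)τ² (s² + d²)`, and `s² + d² = 2(b₁² + b₂²) ≥ (|b₁| + |b₂|)² = 1`.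
-/

theorem one_le_add_sq_add_sub_sq {a b : ℝ} (h : |a| + |b| = 1) : 1 ≤ (a + b) ^ 2 + (a - b) ^ 2 := by
  nlinarith [sq_abs a, sq_abs b, sq_nonneg (|a| - |b|)]

-- The defect is `((b + c²a) x - a c s)²`.
theorem mul_mul_sq_le_mul_add_mul_sq (a b c s x : ℝ) :
    a * b * s ^ 2 ≤ (b + c ^ 2 * a) * (a * (s - c * x) ^ 2 + b * x ^ 2) := by
  nlinarith [sq_nonneg ((b + c ^ 2 * a) * x - a * c * s)]

section

variable {E : Type*} [NormedAddCommGroup E] [InnerProductSpace ℝ E]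

theorem two_mul_norm_sq_combination {X1 X2 U : E} {ρ : ℝ} (C b1 b2 b3 : ℝ)
    (h1 : ‖X1‖ = 1) (h2 : ‖X2‖ = 1) (hρ : ⟪X1, X2⟫ = -ρ)
    (hU1 : ⟪U, X1⟫ = 0) (hU2 : ⟪U, X2⟫ = 0) :
    2 * ‖b1 • X1 + b2 • X2 - b3 • ((C / 2) • (X1 + X2) + U)‖ ^ 2
      = (1 - ρ) * (b1 + b2 - C * b3) ^ 2 + (1 + ρ) * (b1 - b2) ^ 2
        + 2 * ‖U‖ ^ 2 * b3 ^ 2 := by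
  have e11 : ⟪X1, X1⟫ = 1 := by rw [real_inner_self_eq_norm_sq, h1, one_pow]
  have e22 : ⟪X2, X2⟫ = 1 := by rw [real_inner_self_eq_norm_sq, h2, one_pow]
  have e21 : ⟪X2, X1⟫ = -ρ := by rw [real_inner_comm, hρ]
  have e1U : ⟪X1, U⟫ = 0 := by rw [real_inner_comm, hU1]
  have e2U : ⟪X2, U⟫ = 0 := by rw [real_inner_comm, hU2]
  rw [← real_inner_self_eq_norm_sq, ← real_inner_self_eq_norm_sq U]
  simp only [inner_sub_left, inner_sub_right, inner_add_left, inner_add_right,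
    real_inner_smul_left, real_inner_smul_right, e11, e22, hρ, e21, hU1, hU2, e1U, e2U]
  ring

end

theorem two_div_mul_eq_two_div_add {p C : ℝ} (hp : p ≠ 0) (ht : 1 - C ^ 2 * p / 2 ≠ 0) :
    2 / (p * (1 - C ^ 2 * p / 2)) = 2 / p + C ^ 2 / (1 - C ^ 2 * p / 2) := by
  rw [div_add_div _ _ hp ht, show 2 * (1 - C ^ 2 * p / 2) + p * C ^ 2 = 2 by ring]

/-- compatibility constant for s₀ = 2, m₀ = 1 with
X₃ = C(X₁+X₂)/2 + U. -/
theorem stmt13 (n : ℕ) (X1 X2 X3 U : EuclideanSpace ℝ (Fin n)) (ρ C : ℝ)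
    (h1 : ‖X1‖ = 1) (h2 : ‖X2‖ = 1) (hρ : ⟪X1, X2⟫ = -ρ)
    (hρ0 : 0 < ρ) (hρ1 : ρ < 1)
    (hX3 : X3 = (C / 2) • (X1 + X2) + U)
    (hU1 : ⟪U, X1⟫ = 0) (hU2 : ⟪U, X2⟫ = 0)
    (hC : 1 < C) (hC2 : C ^ 2 * (1 - ρ) / 2 < 1)
    (hUnorm : ‖U‖ ^ 2 = 1 - C ^ 2 * (1 - ρ) / 2) :
    IsLeast {t : ℝ | ∃ b1 b2 b3 : ℝ, |b1| + |b2| = 1 ∧ |b3| ≤ 1 ∧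
        t = 2 * ‖b1 • X1 + b2 • X2 - b3 • X3‖ ^ 2}
      ((1 - ρ) * (1 - C ^ 2 * (1 - ρ) / 2)) ∧
    2 / ((1 - ρ) * (1 - C ^ 2 * (1 - ρ) / 2))
      = 2 / (1 - ρ) + C ^ 2 / (1 - C ^ 2 * (1 - ρ) / 2) := by
  set τ2 := 1 - C ^ 2 * (1 - ρ) / 2 with hτ2
  have hφ : 0 < 1 - ρ := by linarith
  have hτ : 0 < τ2 := by linarith
  have hcomb (b1 b2 b3 : ℝ) : 2 * ‖b1 • X1 + b2 • X2 - b3 • X3‖ ^ 2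
      = (1 - ρ) * (b1 + b2 - C * b3) ^ 2 + (1 + ρ) * (b1 - b2) ^ 2 + 2 * τ2 * b3 ^ 2 := by
    rw [hX3, two_mul_norm_sq_combination C b1 b2 b3 h1 h2 hρ hU1 hU2, hUnorm]
  refine ⟨⟨⟨1 / 2, 1 / 2, C * (1 - ρ) / 2, by norm_num, ?_, ?_⟩, ?_⟩,
    two_div_mul_eq_two_div_add hφ.ne' hτ.ne'⟩
  · rw [abs_of_pos (by positivity)]
    nlinarith
  · rw [hcomb]
    ring
  · rintro t ⟨b1, b2, b3, hb, -, rfl⟩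
    have hproj := mul_mul_sq_le_mul_add_mul_sq (1 - ρ) (2 * τ2) C (b1 + b2) b3
    rw [show 2 * τ2 + C ^ 2 * (1 - ρ) = 2 by rw [hτ2]; ring] at hproj
    have hweight : (1 - ρ) * τ2 ≤ 1 + ρ := by nlinarith
    rw [hcomb]
    nlinarith [mul_le_mul_of_nonneg_right hweight (sq_nonneg (b1 - b2)),
      mul_le_mul_of_nonneg_left (one_le_add_sq_add_sub_sq hb) (mul_pos hφ hτ).le]
end

section
/- Let $X_1, X_2$ be unit vectors with $X_1^TX_2 = -\hat\rho \in (0,1)$, $\hat\varphi^2 = 1-\hat\rho$, and let $X_3 = C(X_1+X_2)/2 + U + V$, $X_4 = C(X_1+X_2)/2 + U - V$ where $C > 1$, $C^2\hat\varphi^2/2 < 1$, $U, V$ orthogonal to $X_1, X_2$ and to each other, and $\hat\tau^2 := \|U\|_2^2$ satisfies $0 < \hat\tau^2 < 1 - C^2\hat\varphi^2/2$. Then the compatibility constant for $S_0 = \{1,2\}$ is $\hat\phi^2(S_0) = \hat\varphi^2\hat\tau^2/(C^2\hat\varphi^2/2 + \hat\tau^2)$, i.e. $2/\hat\phi^2(S_0)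 = 2/\hat\varphi^2 + C^2/\hat\tau^2$. -/
open scoped RealInnerProductSpace

/-!
Writing `s = b₃ + b₄` and `d = b₃ - b₄`, the vector `b₁X₁ + b₂X₂ - b₃X₃ - b₄X₄` splits orthogonally into a
part in the plane of `X₁, X₂`, the part `-s U` and the part `-d V`. In the plane, the directions
`X₁ + X₂` and `X₁ - X₂` are orthogonal with squared lengths `2(1 - ρ)` and `2(1 + ρ)`, so half the
objective is
`(1 - ρ)/2 (b₁ + b₂ - s C)² + (1 + ρ)/2 (b₁ - b₂)² + s² τ² + d² ‖V‖²`.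
Completing the square in `s` bounds the terms carrying `b₁ + b₂` from below by
`φ̂²(S₀) (b₁ + b₂)²`, and since `φ̂²(S₀) ≤ 1 - ρ ≤ 1 + ρ` the whole objective is at least
`φ̂²(S₀) ((b₁ + b₂)² + (b₁ - b₂)²) ≥ φ̂²(S₀) (|b₁| + |b₂|)²`. Equality holds at `b₁ = b₂ = 1/2`,
`b₃ = b₄`, with `s` the vertex of the parabola; `C > 1` makes `|b₃| + |b₄| = s ≤ 1`.
-/

section InnerProductSpace

variable {E : Type*} [NormedAddCommGroup E] [InnerProductSpace ℝ E]

theorem norm_smul_add_smul_sq_of_inner_eq_neg {x y : E} {ρ : ℝ} (hx : ‖x‖ = 1) (hy : ‖y‖ = 1)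
    (hxy : ⟪x, y⟫ = -ρ) (α β : ℝ) :
    ‖α • x + β • y‖ ^ 2 = (1 - ρ) / 2 * (α + β) ^ 2 + (1 + ρ) / 2 * (α - β) ^ 2 := by
  rw [norm_add_sq_real, norm_smul, norm_smul, real_inner_smul_left, real_inner_smul_right,
    hx, hy, hxy, mul_pow, mul_pow, Real.norm_eq_abs, Real.norm_eq_abs, sq_abs, sq_abs]
  ring

theorem norm_sq_sub_common_add_unique {x y u v : E} {ρ : ℝ} (hx : ‖x‖ = 1) (hy : ‖y‖ = 1)
    (hxy : ⟪x, y⟫ = -ρ) (hux : ⟪u, x⟫ = 0) (huy : ⟪u, y⟫ = 0) (hvx : ⟪v, x⟫ = 0)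
    (hvy : ⟪v, y⟫ = 0) (huv : ⟪u, v⟫ = 0) (b₁ b₂ b₃ b₄ C : ℝ) :
    ‖b₁ • x + b₂ • y - b₃ • ((C / 2) • (x + y) + u + v) - b₄ • ((C / 2) • (x + y) + u - v)‖ ^ 2 =
      (1 - ρ) / 2 * (b₁ + b₂ - (b₃ + b₄) * C) ^ 2 + (1 + ρ) / 2 * (b₁ - b₂) ^ 2
        + (b₃ + b₄) ^ 2 * ‖u‖ ^ 2 + (b₃ - b₄) ^ 2 * ‖v‖ ^ 2 := by
  set s := b₃ + b₄
  set d := b₃ - b₄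
  have hsplit : b₁ • x + b₂ • y - b₃ • ((C / 2) • (x + y) + u + v) - b₄ • ((C / 2) • (x + y) + u - v)
      = ((b₁ - s * (C / 2)) • x + (b₂ - s * (C / 2)) • y + (-s) • u) + (-d) • v := by
    module
  have hvpl : ⟪(b₁ - s * (C / 2)) • x + (b₂ - s * (C / 2)) • y + (-s) • u, (-d) • v⟫ = 0 := by
    simp only [inner_add_left, inner_smul_left, real_inner_smul_right, real_inner_comm v x,
      real_inner_comm v y, hvx, hvy, huv]
    ring
  have hupl : ⟪(b₁ - s * (C / 2)) • x + (b₂ - s * (C / 2)) • y, (-s) • u⟫ = 0 := by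
    simp only [inner_add_left, inner_smul_left, real_inner_smul_right, real_inner_comm u x,
      real_inner_comm u y, hux, huy]
    ring
  rw [hsplit, norm_add_sq_real, hvpl, norm_add_sq_real, hupl,
    norm_smul_add_smul_sq_of_inner_eq_neg hx hy hxy, norm_smul, norm_smul, mul_pow, mul_pow,
    Real.norm_eq_abs, Real.norm_eq_abs, sq_abs, sq_abs]
  ring

end InnerProductSpace

section CompletingSquare

variable {a t C : ℝ}

theorem mul_div_mul_sq_le_sq_sub_mul_add_sq (hD : 0 < C ^ 2 * a / 2 + t) (w s : ℝ) :
    a * t / (C ^ 2 * a / 2 + t) * w ^ 2 ≤ a * (w - s * C) ^ 2 + 2 * t * s ^ 2 := by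
  rw [div_mul_eq_mul_div, div_le_iff₀ hD]
  nlinarith [sq_nonneg ((C ^ 2 * a + 2 * t) * s - C * a * w)]

theorem sq_sub_mul_add_sq_eq_mul_div_mul_sq (hD : 0 < C ^ 2 * a / 2 + t) {w s : ℝ}
    (hs : s = C * a * w / (C ^ 2 * a + 2 * t)) :
    a * (w - s * C) ^ 2 + 2 * t * s ^ 2 = a * t / (C ^ 2 * a / 2 + t) * w ^ 2 := by
  have hD' : C ^ 2 * a + 2 * t ≠ 0 := by linarith
  rw [hs, show C ^ 2 * a / 2 + t = (C ^ 2 * a + 2 * t) / 2 by ring]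
  set D := C ^ 2 * a + 2 * t with hD_def
  field_simp
  rw [hD_def]
  ring

theorem mul_div_sq_mul_add_le_one (hC : 1 ≤ C) (ha : 0 ≤ a) (ht : 0 < t) :
    C * a / (C ^ 2 * a + 2 * t) ≤ 1 := by
  rw [div_le_one (by positivity)]
  nlinarith [mul_nonneg (mul_nonneg (by linarith : (0 : ℝ) ≤ C) ha) (by linarith : (0 : ℝ) ≤ C - 1)]

end CompletingSquare

theorem sq_abs_add_abs_le_sq_add_add_sq_sub (x y : ℝ) :
    (|x| + |y|) ^ 2 ≤ (x + y) ^ 2 + (x - y) ^ 2 := by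
  nlinarith [two_mul_le_add_sq |x| |y|, sq_abs x, sq_abs y]

theorem mul_div_le_of_abs_add_abs_eq_one {a r t C v b₁ b₂ b₃ b₄ : ℝ} (ha : 0 ≤ a) (har : a ≤ r)
    (ht : 0 < t) (hv : 0 ≤ v) (hb : |b₁| + |b₂| = 1) :
    a * t / (C ^ 2 * a / 2 + t) ≤ a * (b₁ + b₂ - (b₃ + b₄) * C) ^ 2 + 2 * t * (b₃ + b₄) ^ 2
      + r * (b₁ - b₂) ^ 2 + 2 * (b₃ - b₄) ^ 2 * v := by
  have hD : 0 < C ^ 2 * a / 2 + t := by positivity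
  set m := a * t / (C ^ 2 * a / 2 + t)
  have hm : 0 ≤ m := by positivity
  have hma : m ≤ a := by
    rw [div_le_iff₀ hD]
    nlinarith [mul_nonneg ha (mul_nonneg (sq_nonneg C) ha)]
  have hsum : 1 ≤ (b₁ + b₂) ^ 2 + (b₁ - b₂) ^ 2 := by
    simpa [hb] using sq_abs_add_abs_le_sq_add_add_sq_sub b₁ b₂
  calc m ≤ m * ((b₁ + b₂) ^ 2 + (b₁ - b₂) ^ 2) := le_mul_of_one_le_right hm hsum
    _ ≤ m * (b₁ + b₂) ^ 2 + r * (b₁ - b₂) ^ 2 := by nlinarith [sq_nonneg (b₁ - b₂)]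
    _ ≤ _ := by
      have := mul_div_mul_sq_le_sq_sub_mul_add_sq hD (b₁ + b₂) (b₃ + b₄)
      nlinarith [sq_nonneg (b₃ - b₄)]

theorem stmt15_general (n : ℕ) (X1 X2 X3 X4 U V : EuclideanSpace ℝ (Fin n)) (ρ C τ2 : ℝ)
    (h1 : ‖X1‖ = 1) (h2 : ‖X2‖ = 1) (hρ : ⟪X1, X2⟫ = -ρ)
    (hρ0 : 0 < ρ) (hρ1 : ρ < 1)
    (hX3 : X3 = (C / 2) • (X1 + X2) + U + V)
    (hX4 : X4 = (C / 2) • (X1 + X2) + U - V)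
    (hU1 : ⟪U, X1⟫ = 0) (hU2 : ⟪U, X2⟫ = 0)
    (hV1 : ⟪V, X1⟫ = 0) (hV2 : ⟪V, X2⟫ = 0)
    (hUV : ⟪U, V⟫ = 0)
    (hC : 1 < C)
    (hτ : τ2 = ‖U‖ ^ 2) (hτ0 : 0 < τ2) :
    IsLeast {t : ℝ | ∃ b1 b2 b3 b4 : ℝ, |b1| + |b2| = 1 ∧ |b3| + |b4| ≤ 1 ∧
        t = 2 * ‖b1 • X1 + b2 • X2 - b3 • X3 - b4 • X4‖ ^ 2}
      ((1 - ρ) * τ2 / (C ^ 2 * (1 - ρ) / 2 + τ2)) ∧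
    2 / ((1 - ρ) * τ2 / (C ^ 2 * (1 - ρ) / 2 + τ2)) = 2 / (1 - ρ) + C ^ 2 / τ2 := by
  have ha : 0 < 1 - ρ := by linarith
  have hobj (b1 b2 b3 b4 : ℝ) : 2 * ‖b1 • X1 + b2 • X2 - b3 • X3 - b4 • X4‖ ^ 2 =
      (1 - ρ) * (b1 + b2 - (b3 + b4) * C) ^ 2 + 2 * τ2 * (b3 + b4) ^ 2
        + (1 + ρ) * (b1 - b2) ^ 2 + 2 * (b3 - b4) ^ 2 * ‖V‖ ^ 2 := by
    rw [hX3, hX4, norm_sq_sub_common_add_unique h1 h2 hρ hU1 hU2 hV1 hV2 hUV, ← hτ]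
    ring
  refine ⟨⟨?_, ?_⟩, by field_simp; ring⟩
  · set s := C * (1 - ρ) / (C ^ 2 * (1 - ρ) + 2 * τ2) with hs
    have hs1 : s ≤ 1 := mul_div_sq_mul_add_le_one hC.le ha.le hτ0
    refine ⟨1 / 2, 1 / 2, s / 2, s / 2, by norm_num, by rw [abs_of_nonneg (by positivity)]; linarith, ?_⟩
    have hvertex := sq_sub_mul_add_sq_eq_mul_div_mul_sq (a := 1 - ρ) (t := τ2) (C := C) (w := 1) (s := s)
      (by positivity) (by rw [hs, mul_one])
    rw [hobj]
    linear_combination hvertex.symm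
  · rintro _ ⟨b1, b2, b3, b4, hb12, -, rfl⟩
    rw [hobj]
    exact mul_div_le_of_abs_add_abs_eq_one ha.le (by linarith) hτ0 (by positivity) hb12

/-- compatibility constant for s₀ = m₀ = 2 with common and unique parts. -/
theorem stmt15 (n : ℕ) (X1 X2 X3 X4 U V : EuclideanSpace ℝ (Fin n)) (ρ C τ2 : ℝ)
    (h1 : ‖X1‖ = 1) (h2 : ‖X2‖ = 1) (hρ : ⟪X1, X2⟫ = -ρ)
    (hρ0 : 0 < ρ) (hρ1 : ρ < 1)
    (hX3 : X3 = (C / 2) • (X1 + X2) + U + V)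
    (hX4 : X4 = (C / 2) • (X1 + X2) + U - V)
    (hU1 : ⟪U, X1⟫ = 0) (hU2 : ⟪U, X2⟫ = 0)
    (hV1 : ⟪V, X1⟫ = 0) (hV2 : ⟪V, X2⟫ = 0)
    (hUV : ⟪U, V⟫ = 0)
    (hC : 1 < C) (hC2 : C ^ 2 * (1 - ρ) / 2 < 1)
    (hτ : τ2 = ‖U‖ ^ 2) (hτ0 : 0 < τ2) (hτ1 : τ2 < 1 - C ^ 2 * (1 - ρ) / 2) :
    IsLeast {t : ℝ | ∃ b1 b2 b3 b4 : ℝ, |b1| + |b2| = 1 ∧ |b3| + |b4| ≤ 1 ∧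
        t = 2 * ‖b1 • X1 + b2 • X2 - b3 • X3 - b4 • X4‖ ^ 2}
      ((1 - ρ) * τ2 / (C ^ 2 * (1 - ρ) / 2 + τ2)) ∧
    2 / ((1 - ρ) * τ2 / (C ^ 2 * (1 - ρ) / 2 + τ2)) = 2 / (1 - ρ) + C ^ 2 / τ2 :=
  stmt15_general n X1 X2 X3 X4 U V ρ C τ2 h1 h2 hρ hρ0 hρ1 hX3 hX4 hU1 hU2 hV1 hV2 hUV hC hτ hτ0
end

section
/- Let $X_1, X_2$ be unit vectors with $X_1^TX_2 = -\hat\rho \in (0,1)$, $\hat\varphi^2 = 1-\hat\rho$, and $X_3 = C(X_1+X_2)/2 + V$, $X_4 = C(X_1+X_2)/2 - V$ where $C > 1$, $C^2\hat\varphi^2/2 < 1$, $V$ orthogonal to $X_1, X_2$. Then the compatibility constant for $S_0 = \{1,2\}$ is zero: there exists $\beta$ with $\|\beta_{S_0}\|_1 = 1$, $\|\beta_{-S_0}\|_1 \le 1$ and $X_1\beta_1 + X_2\beta_2 + X_3\beta_3 + X_4\beta_4 = 0$. -/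
open scoped RealInnerProductSpace

/-- the compatibility constant vanishes when the common part has no
orthogonal component U. -/
theorem stmt16 (n : ℕ) (X1 X2 X3 X4 V : EuclideanSpace ℝ (Fin n)) (ρ C : ℝ)
    (h1 : ‖X1‖ = 1) (h2 : ‖X2‖ = 1) (hρ : ⟪X1, X2⟫ = -ρ)
    (hρ0 : 0 < ρ) (hρ1 : ρ < 1)
    (hX3 : X3 = (C / 2) • (X1 + X2) + V)
    (hX4 : X4 = (C / 2) • (X1 + X2) - V)
    (hV1 : ⟪V, X1⟫ = 0) (hV2 : ⟪V, X2⟫ = 0)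
    (hC : 1 < C) (hC2 : C ^ 2 * (1 - ρ) / 2 < 1) :
    ∃ b1 b2 b3 b4 : ℝ, |b1| + |b2| = 1 ∧ |b3| + |b4| ≤ 1 ∧
      b1 • X1 + b2 • X2 + b3 • X3 + b4 • X4 = 0 := by
  have hC0 : (0:ℝ) < C := lt_trans one_pos hC
  refine ⟨1/2, 1/2, -(1/(2*C)), -(1/(2*C)), ?_, ?_, ?_⟩
  · rw [abs_of_nonneg (by norm_num : (0:ℝ) ≤ 1/2)]; norm_num
  · rw [abs_neg, abs_of_nonneg (by positivity)]
    rw [← add_div]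
    rw [div_le_one (by positivity)]
    linarith
  · subst hX3 hX4
    have : (-(1/(2*C))) • ((C / 2) • (X1 + X2) + V) + (-(1/(2*C))) • ((C / 2) • (X1 + X2) - V)
        = (-(1/2 : ℝ)) • (X1 + X2) := by
      rw [smul_add, smul_sub, smul_smul]
      have hc : -(1 / (2 * C)) * (C / 2) = -(1/(4:ℝ)) := by
        field_simp; ring
      rw [hc]
      module
    rw [add_assoc, this]
    module
end
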